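/- Let n ≥ 1, ζ ∈ 𝕊ⁿ, x ∈ 𝕊ⁿ, and δ > 0. If there exists a point w ∈ B_ζ(δ) ∩ Γ(x), then B_ζ(δ) ⊂ B_x(16δ); that is, every z ∈ 𝔹ⁿ with |1 − ⟨z,ζ⟩| < δ satisfies |1 − ⟨z,x⟩| < 16δ. -/

import Mathlib

/-!
Write `d(z, w) = |1 - ⟨z, w⟩|^{1/2}`. Splitting `z` and `w` along a third point `u`,
`1 - ⟨z, w⟩` is the sum of `1 - ⟨z, u⟩⟨u, w⟩`, of size at most `|1 - ⟨z, u⟩| + |1 - ⟨u, w⟩|`,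
and a remainder that Cauchy–Schwarz bounds by `((1 - |⟨z, u⟩|²)(1 - |⟨u, w⟩|²))^{1/2}`, hence by
`2 d(z, u) d(u, w)`; so `d` satisfies the triangle inequality on the closed ball.
For `w ∈ Γ(x) ∩ B_ζ(δ)` we have `|1 - ⟨w, x⟩| < 1 - |w|² ≤ 2 |1 - ⟨w, ζ⟩| < 2δ`, and then
`d(z, x) ≤ d(z, ζ) + d(ζ, w) + d(w, x) < 4 √δ` for every `z ∈ B_ζ(δ)`.
-/

open MeasureTheory Metric Set Filter
open scoped ENNReal Topology NNReal ComplexConjugate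

noncomputable section

/-- ℂⁿ with the Euclidean norm. -/
abbrev En (n : ℕ) := EuclideanSpace ℂ (Fin n)

instance (n : ℕ) : MeasurableSpace (En n) := borel _
instance (n : ℕ) : BorelSpace (En n) := ⟨rfl⟩

/-- The open unit ball 𝔹ⁿ ⊂ ℂⁿ. -/
def ballB (n : ℕ) : Set (En n) := Metric.ball 0 1

/-- The unit sphere 𝕊ⁿ = ∂𝔹ⁿ. -/
def sphereS (n : ℕ) : Set (En n) := Metric.sphere 0 1

/-- The Hermitian pairing ⟨z,w⟩ = z₁w̄₁ + ⋯ + zₙw̄ₙ. -/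
def hpair {n : ℕ} (z w : En n) : ℂ := ∑ i, z i * conj (w i)

/-- Lebesgue measure on ℂⁿ (transported from the product space `Fin n → ℂ`). -/
def volE (n : ℕ) : Measure (En n) :=
  Measure.map (EuclideanSpace.equiv (Fin n) ℂ).symm volume

/-- The normalized volume measure v on 𝔹ⁿ, with v(𝔹ⁿ) = 1. -/
def vMeas (n : ℕ) : Measure (En n) :=
  (volE n (ballB n))⁻¹ • (volE n).restrict (ballB n)

/-- The normalized surface measure σ on 𝕊ⁿ (viewed as a Borel measure on ℂⁿ
supported on the sphere), with σ(𝕊ⁿ) = 1. -/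
def sigmaS (n : ℕ) : Measure (En n) :=
  ((volE n).toSphere Set.univ)⁻¹ •
    Measure.map (Subtype.val : sphere (0 : En n) 1 → En n) ((volE n).toSphere)

/-- The radial derivative Rb(z) = Σ z_k ∂b/∂z_k(z), i.e. the Fréchet derivative
of `b` at `z` evaluated at `z`. -/
def Rad (n : ℕ) (b : En n → ℂ) (z : En n) : ℂ := fderiv ℂ b z z

/-- The Volterra-type operator J_b f(z) = ∫₀¹ f(tz) Rb(tz) dt/t. -/
def Jb (n : ℕ) (b f : En n → ℂ) (z : En n) : ℂ :=
  ∫ t in (0:ℝ)..1, f (t • z) * Rad n b (t • z) / (t : ℂ)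

/-- The integral of ‖f(rζ)‖^p over the unit sphere. -/
def sphereInt (n : ℕ) (p : ℝ) (f : En n → ℂ) (r : ℝ) : ℝ :=
  ∫ ζ in sphereS n, ‖f (r • ζ)‖ ^ p ∂ sigmaS n

/-- Membership in the Hardy space H^p: holomorphic on 𝔹ⁿ with bounded p-means. -/
def MemHp (n : ℕ) (p : ℝ) (f : En n → ℂ) : Prop :=
  DifferentiableOn ℂ f (ballB n) ∧ BddAbove (sphereInt n p f '' Ioo (0:ℝ) 1)

/-- The H^p norm: ‖f‖_{H^p} = (sup_{0<r<1} ∫_{𝕊ⁿ}|f(rζ)|^p dσ(ζ))^{1/p}. -/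
def HpNorm (n : ℕ) (p : ℝ) (f : En n → ℂ) : ℝ :=
  (sSup (sphereInt n p f '' Ioo (0:ℝ) 1)) ^ (1/p)

/-- The non-isotropic balls B_ζ(δ) = {z ∈ 𝔹ⁿ : |1 - ⟨z,ζ⟩| < δ}. -/
def CBall (n : ℕ) (ζ : En n) (δ : ℝ) : Set (En n) :=
  {z ∈ ballB n | ‖1 - hpair z ζ‖ < δ}

/-- The measure dμ_b = |Rb(z)|²(1-|z|²) dv(z) on 𝔹ⁿ. -/
def muB (n : ℕ) (b : En n → ℂ) : Measure (En n) :=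
  (vMeas n).withDensity fun z => ENNReal.ofReal (‖Rad n b z‖ ^ 2 * (1 - ‖z‖ ^ 2))

/-- μ is a Carleson measure: μ(B_ζ(δ)) ≤ C δⁿ for all ζ ∈ 𝕊ⁿ, δ > 0. -/
def IsCarleson (n : ℕ) (μ : Measure (En n)) : Prop :=
  ∃ C > 0, ∀ ζ ∈ sphereS n, ∀ δ > 0, μ (CBall n ζ δ) ≤ ENNReal.ofReal (C * δ ^ n)

/-- μ is a vanishing Carleson measure: sup_{ζ∈𝕊ⁿ} μ(B_ζ(δ))/δⁿ → 0 as δ → 0⁺. -/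
def IsVanishingCarleson (n : ℕ) (μ : Measure (En n)) : Prop :=
  Tendsto (fun δ : ℝ => ⨆ ζ ∈ sphereS n, μ (CBall n ζ δ) / ENNReal.ofReal (δ ^ n))
    (𝓝[>] 0) (𝓝 0)

/-- b ∈ BMOA(𝔹ⁿ): b is holomorphic on 𝔹ⁿ and μ_b is a Carleson measure. -/
def MemBMOA (n : ℕ) (b : En n → ℂ) : Prop :=
  DifferentiableOn ℂ b (ballB n) ∧ IsCarleson n (muB n b)

/-- b ∈ VMOA(𝔹ⁿ): b is holomorphic on 𝔹ⁿ and μ_b is a vanishing Carleson measure. -/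
def MemVMOA (n : ℕ) (b : En n → ℂ) : Prop :=
  DifferentiableOn ℂ b (ballB n) ∧ IsVanishingCarleson n (muB n b)

/-- The test functions f_a(z) = (1-|a|²)^{1/p} (1-⟨z,a⟩)^{-(n+1)/p}. -/
def testF (n : ℕ) (p : ℝ) (a z : En n) : ℂ :=
  ((((1:ℝ) - ‖a‖ ^ 2) ^ (1/p) : ℝ) : ℂ) * (1 - hpair z a) ^ (-(((n : ℂ) + 1) / (p : ℂ)))

/-- The non-isotropic metric ball S_ε(ω) = {ζ ∈ 𝕊ⁿ : |1-⟨ζ,ω⟩| < ε}. -/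
def SBall (n : ℕ) (ω : En n) (ε : ℝ) : Set (En n) :=
  {ζ ∈ sphereS n | ‖1 - hpair ζ ω‖ < ε}

/-- The admissible approach region Γ(ζ) = {z ∈ 𝔹ⁿ : |1-⟨z,ζ⟩| < 1-|z|²}. -/
def Gam (n : ℕ) (ζ : En n) : Set (En n) :=
  {z ∈ ballB n | ‖1 - hpair z ζ‖ < 1 - ‖z‖ ^ 2}

/-- The ℓ^p norm of a sequence of complex numbers. -/
def seqNorm (p : ℝ) (α : ℕ → ℂ) : ℝ := (∑' k, ‖α k‖ ^ p) ^ (1/p)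

/-- Convergence of the series Σ_k g_k to F in the H^p norm. -/
def HpSeriesTendsto (n : ℕ) (p : ℝ) (g : ℕ → En n → ℂ) (F : En n → ℂ) : Prop :=
  Tendsto (fun N => HpNorm n p (F - fun z => ∑ k ∈ Finset.range N, g k z)) atTop (𝓝 0)

open scoped InnerProductSpace

section NonisotropicTriangle

variable {𝕜 E : Type*} [RCLike 𝕜] [NormedAddCommGroup E] [InnerProductSpace 𝕜 E]

lemma norm_one_sub_mul_le {p : 𝕜} (hp : ‖p‖ ≤ 1) (q : 𝕜) :
    ‖1 - p * q‖ ≤ ‖1 - p‖ + ‖1 - q‖ :=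
  calc ‖1 - p * q‖ = ‖(1 - p) + p * (1 - q)‖ := by ring_nf
    _ ≤ ‖1 - p‖ + ‖p‖ * ‖1 - q‖ := (norm_add_le _ _).trans_eq (by rw [norm_mul])
    _ ≤ ‖1 - p‖ + ‖1 - q‖ := by gcongr; exact mul_le_of_le_one_left (norm_nonneg _) hp

lemma one_sub_norm_sq_le_two_mul_norm_one_sub (p : 𝕜) : 1 - ‖p‖ ^ 2 ≤ 2 * ‖1 - p‖ := by
  have h : 1 - ‖p‖ ≤ ‖1 - p‖ := by simpa using norm_sub_norm_le (1 : 𝕜) p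
  nlinarith [norm_nonneg p, norm_nonneg (1 - p)]

lemma one_sub_norm_sq_le_two_mul_norm_one_sub_inner {u : E} (hu : ‖u‖ ≤ 1) (w : E) :
    1 - ‖w‖ ^ 2 ≤ 2 * ‖1 - ⟪u, w⟫_𝕜‖ := by
  have h : ‖⟪u, w⟫_𝕜‖ ≤ ‖w‖ :=
    (norm_inner_le_norm u w).trans (mul_le_of_le_one_left (norm_nonneg w) hu)
  nlinarith [one_sub_norm_sq_le_two_mul_norm_one_sub ⟪u, w⟫_𝕜, norm_nonneg ⟪u, w⟫_𝕜]

lemma norm_one_sub_inner_comm (x y : E) : ‖1 - ⟪x, y⟫_𝕜‖ = ‖1 - ⟪y, x⟫_𝕜‖ := by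
  rw [← inner_conj_symm, ← RCLike.norm_conj, map_sub, map_one, RCLike.conj_conj]

lemma norm_sub_inner_smul_sq_add (u z : E) :
    ‖z - ⟪u, z⟫_𝕜 • u‖ ^ 2 + ‖⟪u, z⟫_𝕜‖ ^ 2 * (1 - ‖u‖ ^ 2) = ‖z‖ ^ 2 - ‖⟪u, z⟫_𝕜‖ ^ 2 := by
  have h := @norm_sub_sq 𝕜 _ _ _ _ z (⟪u, z⟫_𝕜 • u)
  rw [inner_smul_right, ← inner_conj_symm z u, RCLike.mul_conj, norm_smul] at h
  rw [h, ← RCLike.ofReal_pow, RCLike.ofReal_re, mul_pow]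
  ring

lemma one_sub_inner_eq (u z w : E) :
    1 - ⟪z, w⟫_𝕜 = (1 - ⟪z, u⟫_𝕜 * ⟪u, w⟫_𝕜) -
      (⟪z - ⟪u, z⟫_𝕜 • u, w - ⟪u, w⟫_𝕜 • u⟫_𝕜 + ⟪z, u⟫_𝕜 * ⟪u, w⟫_𝕜 * (1 - (‖u‖ : 𝕜) ^ 2)) := by
  rw [inner_sub_left, inner_sub_right, inner_sub_right, inner_smul_left, inner_smul_right,
    inner_smul_left, inner_smul_right, inner_self_eq_norm_sq_to_K, inner_conj_symm]
  ring

lemma norm_inner_sub_inner_smul_add_le {u z w : E} (hu : ‖u‖ ≤ 1) (hz : ‖z‖ ≤ 1) (hw : ‖w‖ ≤ 1) :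
    ‖⟪z - ⟪u, z⟫_𝕜 • u, w - ⟪u, w⟫_𝕜 • u⟫_𝕜 + ⟪z, u⟫_𝕜 * ⟪u, w⟫_𝕜 * (1 - (‖u‖ : 𝕜) ^ 2)‖ ≤
      2 * √‖1 - ⟪z, u⟫_𝕜‖ * √‖1 - ⟪u, w⟫_𝕜‖ := by
  set p := ⟪u, z⟫_𝕜
  set q := ⟪u, w⟫_𝕜
  set A := ‖z - p • u‖
  set B := ‖w - q • u‖
  set c := 1 - ‖u‖ ^ 2 with hc
  have hc0 : 0 ≤ c := by nlinarith [norm_nonneg u]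
  have hnorm : ‖⟪z - p • u, w - q • u⟫_𝕜 + ⟪z, u⟫_𝕜 * q * (1 - (‖u‖ : 𝕜) ^ 2)‖ ≤
      A * B + ‖p‖ * ‖q‖ * c := by
    have hc' : (1 - (‖u‖ : 𝕜) ^ 2) = ((c : ℝ) : 𝕜) := by rw [hc]; push_cast; ring
    refine (norm_add_le _ _).trans (add_le_add (norm_inner_le_norm _ _) (le_of_eq ?_))
    rw [hc', norm_mul, norm_mul, RCLike.norm_of_nonneg hc0, ← inner_conj_symm, RCLike.norm_conj]
  have hA : A ^ 2 + ‖p‖ ^ 2 * c ≤ 1 - ‖p‖ ^ 2 := by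
    rw [norm_sub_inner_smul_sq_add]; nlinarith [norm_nonneg z]
  have hB : B ^ 2 + ‖q‖ ^ 2 * c ≤ 1 - ‖q‖ ^ 2 := by
    rw [norm_sub_inner_smul_sq_add]; nlinarith [norm_nonneg w]
  have hp := one_sub_norm_sq_le_two_mul_norm_one_sub p
  have hq := one_sub_norm_sq_le_two_mul_norm_one_sub q
  rw [norm_one_sub_inner_comm z u]
  refine hnorm.trans ((pow_le_pow_iff_left₀ (by positivity) (by positivity) two_ne_zero).mp ?_)
  calc (A * B + ‖p‖ * ‖q‖ * c) ^ 2
      ≤ (A ^ 2 + ‖p‖ ^ 2 * c) * (B ^ 2 + ‖q‖ ^ 2 * c) := by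
        nlinarith [mul_nonneg hc0 (sq_nonneg (A * ‖q‖ - B * ‖p‖))]
    _ ≤ (2 * ‖1 - p‖) * (2 * ‖1 - q‖) := by
        gcongr <;> nlinarith [sq_nonneg A, sq_nonneg B, mul_nonneg (sq_nonneg ‖p‖) hc0,
          mul_nonneg (sq_nonneg ‖q‖) hc0]
    _ = (2 * √‖1 - p‖ * √‖1 - q‖) ^ 2 := by
        rw [mul_pow, mul_pow, Real.sq_sqrt (norm_nonneg _), Real.sq_sqrt (norm_nonneg _)]; ring

lemma sqrt_norm_one_sub_inner_le {u z w : E} (hz : ‖z‖ ≤ 1) (hu : ‖u‖ ≤ 1) (hw : ‖w‖ ≤ 1) :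
    √‖1 - ⟪z, w⟫_𝕜‖ ≤ √‖1 - ⟪z, u⟫_𝕜‖ + √‖1 - ⟪u, w⟫_𝕜‖ := by
  have hzu : ‖⟪z, u⟫_𝕜‖ ≤ 1 :=
    (norm_inner_le_norm z u).trans (mul_le_one₀ hz (norm_nonneg u) hu)
  have key : ‖1 - ⟪z, w⟫_𝕜‖ ≤ (√‖1 - ⟪z, u⟫_𝕜‖ + √‖1 - ⟪u, w⟫_𝕜‖) ^ 2 :=
    calc ‖1 - ⟪z, w⟫_𝕜‖
        ≤ ‖1 - ⟪z, u⟫_𝕜 * ⟪u, w⟫_𝕜‖ + ‖⟪z - ⟪u, z⟫_𝕜 • u, w - ⟪u, w⟫_𝕜 • u⟫_𝕜 +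
            ⟪z, u⟫_𝕜 * ⟪u, w⟫_𝕜 * (1 - (‖u‖ : 𝕜) ^ 2)‖ := by
          rw [one_sub_inner_eq u]; exact norm_sub_le _ _
      _ ≤ (‖1 - ⟪z, u⟫_𝕜‖ + ‖1 - ⟪u, w⟫_𝕜‖) + 2 * √‖1 - ⟪z, u⟫_𝕜‖ * √‖1 - ⟪u, w⟫_𝕜‖ :=
          add_le_add (norm_one_sub_mul_le hzu _) (norm_inner_sub_inner_smul_add_le hu hz hw)
      _ = (√‖1 - ⟪z, u⟫_𝕜‖ + √‖1 - ⟪u, w⟫_𝕜‖) ^ 2 := by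
          rw [add_sq, Real.sq_sqrt (norm_nonneg _), Real.sq_sqrt (norm_nonneg _)]; ring
  exact (Real.sqrt_le_sqrt key).trans_eq (Real.sqrt_sq (by positivity))

end NonisotropicTriangle

lemma hpair_eq_inner {n : ℕ} (z w : En n) : hpair z w = ⟪w, z⟫_ℂ := by
  simp [hpair, PiLp.inner_apply, RCLike.inner_apply]

theorem stmt18_general (n : ℕ) (ζ x : En n) (hζ : ζ ∈ sphereS n)
    (hx : x ∈ sphereS n) (δ : ℝ) (w : En n)
    (hw : w ∈ CBall n ζ δ ∩ Gam n x) :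
    CBall n ζ δ ⊆ CBall n x (16 * δ) := by
  obtain ⟨⟨hwB, hwζ⟩, -, hwx⟩ := hw
  rintro z ⟨hzB, hzζ⟩
  refine ⟨hzB, ?_⟩
  simp only [ballB, sphereS, mem_ball_zero_iff, mem_sphere_zero_iff_norm] at hζ hx hzB hwB
  simp only [hpair_eq_inner] at hwζ hwx hzζ ⊢
  have hδ : 0 ≤ δ := (norm_nonneg _).trans hzζ.le
  have hxw : ‖1 - ⟪x, w⟫_ℂ‖ < 4 * δ := by
    linarith [one_sub_norm_sq_le_two_mul_norm_one_sub_inner hζ.le w (𝕜 := ℂ)]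
  rw [norm_one_sub_inner_comm] at hwζ
  have hroot : √‖1 - ⟪x, z⟫_ℂ‖ < 4 * √δ :=
    calc √‖1 - ⟪x, z⟫_ℂ‖
        ≤ √‖1 - ⟪x, w⟫_ℂ‖ + √‖1 - ⟪w, ζ⟫_ℂ‖ + √‖1 - ⟪ζ, z⟫_ℂ‖ := by
          grw [sqrt_norm_one_sub_inner_le hx.le hζ.le hzB.le,
            sqrt_norm_one_sub_inner_le hx.le hwB.le hζ.le]
      _ < √(4 * δ) + √δ + √δ := by gcongr
      _ = 4 * √δ := by
          rw [Real.sqrt_mul' _ hδ, show (4 : ℝ) = 2 ^ 2 by norm_num, Real.sqrt_sq zero_le_two]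
          ring
  calc ‖1 - ⟪x, z⟫_ℂ‖ = √‖1 - ⟪x, z⟫_ℂ‖ ^ 2 := (Real.sq_sqrt (norm_nonneg _)).symm
    _ < (4 * √δ) ^ 2 := by gcongr
    _ = 16 * δ := by rw [mul_pow, Real.sq_sqrt hδ]; norm_num

/-- if B_ζ(δ) meets Γ(x) for some x ∈ 𝕊ⁿ, then B_ζ(δ) ⊂ B_x(16δ). -/
theorem stmt18 (n : ℕ) (hn : 1 ≤ n) (ζ x : En n) (hζ : ζ ∈ sphereS n)
    (hx : x ∈ sphereS n) (δ : ℝ) (hδ : 0 < δ) (w : En n)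
    (hw : w ∈ CBall n ζ δ ∩ Gam n x) :
    CBall n ζ δ ⊆ CBall n x (16 * δ) :=
  stmt18_general n ζ x hζ hx δ w hw
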